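/- There is no product vector |α⟩⊗|β⟩ in ℂ³ ⊗ ℂ³ such that ⟨αβ|ψ₁⟩ ≠ 0 while ⟨αβ|ψ₂⟩ = ⟨αβ|ψ₃⟩ = ⟨αβ|ψ₄⟩ = 0, where |ψ₁⟩ = |00⟩+|11⟩+|22⟩, |ψ₂⟩ = |00⟩+ω|11⟩+ω²|22⟩, |ψ₃⟩ = |00⟩+ω²|11⟩+ω|22⟩, |ψ₄⟩ = |01⟩, with ω = e^{2πi/3}. -/

import Mathlib

/-!
Write `cᵢ` for the conjugate of `αᵢ βᵢ`, the diagonal amplitudes of `α ⊗ β`. Orthogonality to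
`ψ₂` and `ψ₃` says that two discrete Fourier coefficients of `(c₀, c₁, c₂)` vanish, which forces
`c₀ = c₁ = c₂`. Orthogonality to `ψ₄` says `α₀ β₁ = 0`, so `c₀` or `c₁` vanishes, hence all
three do, and so does the overlap `c₀ + c₁ + c₂` with `ψ₁`.
-/

open scoped ComplexInnerProductSpace

/-- ω = e^{2πi/3}. -/
noncomputable def omega : ℂ := Complex.exp (2 * Real.pi * Complex.I / 3)

/-- Product vector α ⊗ β in ℂ³ ⊗ ℂ³ ≅ ℂ^(3×3). -/
noncomputable def prodVec (α β : EuclideanSpace ℂ (Fin 3)) :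
    EuclideanSpace ℂ (Fin 3 × Fin 3) :=
  WithLp.toLp 2 (fun p => α p.1 * β p.2)

noncomputable def psiQutrit : Fin 4 → EuclideanSpace ℂ (Fin 3 × Fin 3)
  | 0 => WithLp.toLp 2 (fun p => if p = (0, 0) then 1 else if p = (1, 1) then 1 else
      if p = (2, 2) then 1 else 0)
  | 1 => WithLp.toLp 2 (fun p => if p = (0, 0) then 1 else if p = (1, 1) then omega else
      if p = (2, 2) then omega ^ 2 else 0)
  | 2 => WithLp.toLp 2 (fun p => if p = (0, 0) then 1 else if p = (1, 1) then omega ^ 2 else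
      if p = (2, 2) then omega else 0)
  | 3 => WithLp.toLp 2 (fun p => if p = (0, 1) then 1 else 0)

lemma omega_pow_three : omega ^ 3 = 1 := by
  rw [omega, ← Complex.exp_nat_mul, Nat.cast_ofNat,
    show (3 : ℂ) * (2 * Real.pi * Complex.I / 3) = 2 * Real.pi * Complex.I by ring]
  exact Complex.exp_two_pi_mul_I

lemma omega_ne_one : omega ≠ 1 := by
  rw [omega, Ne, Complex.exp_eq_one_iff]
  rintro ⟨n, hn⟩
  have h3n : ((3 * n : ℤ) : ℂ) = 1 := by
    push_cast
    apply mul_right_cancel₀ Complex.two_pi_I_ne_zero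
    linear_combination -3 * hn
  have : 3 * n = 1 := by exact_mod_cast h3n
  omega

lemma omega_sq_add_omega_add_one : omega ^ 2 + omega + 1 = 0 := by
  have h : (omega - 1) * (omega ^ 2 + omega + 1) = 0 := by
    linear_combination omega_pow_three
  exact (mul_eq_zero.mp h).resolve_left (sub_ne_zero.mpr omega_ne_one)

lemma eq_of_cube_root_sums_eq_zero {K : Type*} [Field K] {ζ c₀ c₁ c₂ : K}
    (hζ : ζ ^ 2 + ζ + 1 = 0) (h3 : (3 : K) ≠ 0)
    (h₁ : c₀ + ζ * c₁ + ζ ^ 2 * c₂ = 0) (h₂ : c₀ + ζ ^ 2 * c₁ + ζ * c₂ = 0) :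
    c₀ = c₂ ∧ c₁ = c₂ := by
  have hsq : (1 + 2 * ζ) ^ 2 = -3 := by linear_combination 4 * hζ
  have hunit : 1 + 2 * ζ ≠ 0 := fun h => h3 (by linear_combination hsq - (1 + 2 * ζ) * h)
  have hx : (c₀ - c₂) * (1 + 2 * ζ) = 0 := by
    linear_combination (1 + ζ) * h₁ + ζ * h₂ - ((1 + ζ) * c₂ + ζ * c₁) * hζ
  have hc₀ : c₀ = c₂ := sub_eq_zero.mp ((mul_eq_zero.mp hx).resolve_right hunit)
  exact ⟨hc₀, by linear_combination 2 * hc₀ - h₁ - h₂ + (c₁ + c₂) * hζ⟩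

section Overlaps

variable (α β : EuclideanSpace ℂ (Fin 3))

lemma inner_prodVec_toLp (f : Fin 3 × Fin 3 → ℂ) :
    ⟪prodVec α β, WithLp.toLp 2 f⟫ = ∑ p, starRingEnd ℂ (α p.1 * β p.2) * f p := by
  simp [prodVec, PiLp.inner_apply, mul_comm]

lemma inner_prodVec_psiQutrit_zero :
    ⟪prodVec α β, psiQutrit 0⟫ = starRingEnd ℂ (α 0 * β 0) + starRingEnd ℂ (α 1 * β 1) +
      starRingEnd ℂ (α 2 * β 2) := by
  simp [psiQutrit, inner_prodVec_toLp, Fintype.sum_prod_type, Fin.sum_univ_three]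

lemma inner_prodVec_psiQutrit_one :
    ⟪prodVec α β, psiQutrit 1⟫ = starRingEnd ℂ (α 0 * β 0) +
      omega * starRingEnd ℂ (α 1 * β 1) + omega ^ 2 * starRingEnd ℂ (α 2 * β 2) := by
  simp [psiQutrit, inner_prodVec_toLp, Fintype.sum_prod_type, Fin.sum_univ_three]
  ring

lemma inner_prodVec_psiQutrit_two :
    ⟪prodVec α β, psiQutrit 2⟫ = starRingEnd ℂ (α 0 * β 0) +
      omega ^ 2 * starRingEnd ℂ (α 1 * β 1) + omega * starRingEnd ℂ (α 2 * β 2) := by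
  simp [psiQutrit, inner_prodVec_toLp, Fintype.sum_prod_type, Fin.sum_univ_three]
  ring

lemma inner_prodVec_psiQutrit_three :
    ⟪prodVec α β, psiQutrit 3⟫ = starRingEnd ℂ (α 0 * β 1) := by
  simp [psiQutrit, inner_prodVec_toLp]

end Overlaps

/-- No product vector has nonzero overlap with ψ₁ and zero overlap with
ψ₂, ψ₃, ψ₄: the criterion for conclusive local identification of ψ₁ fails. -/
theorem stmt6 :
    ¬ ∃ α β : EuclideanSpace ℂ (Fin 3),
      ⟪prodVec α β, psiQutrit 0⟫ ≠ 0 ∧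
      ⟪prodVec α β, psiQutrit 1⟫ = 0 ∧
      ⟪prodVec α β, psiQutrit 2⟫ = 0 ∧
      ⟪prodVec α β, psiQutrit 3⟫ = 0 := by
  rintro ⟨α, β, h₀, h₁, h₂, h₃⟩
  rw [inner_prodVec_psiQutrit_zero] at h₀
  rw [inner_prodVec_psiQutrit_one] at h₁
  rw [inner_prodVec_psiQutrit_two] at h₂
  rw [inner_prodVec_psiQutrit_three, map_eq_zero, mul_eq_zero] at h₃
  obtain ⟨hc₀, hc₁⟩ :=
    eq_of_cube_root_sums_eq_zero omega_sq_add_omega_add_one three_ne_zero h₁ h₂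
  have hc₂ : starRingEnd ℂ (α 2 * β 2) = 0 := by
    rcases h₃ with h | h
    · rw [← hc₀, h, zero_mul, map_zero]
    · rw [← hc₁, h, mul_zero, map_zero]
  exact h₀ (by rw [hc₀, hc₁, hc₂]; ring)
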